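/- arXiv:2504.11594 — 4 statements merged into one kernel-verified Lean document; each statement's English description precedes it below -/
import Mathlib

section
/- (Hartman–Stampacchia lemma, as applied in the paper.) Let N ≥ 1, C > 0, r₀ ∈ ℝ, and let Θ : [r₀, ∞) → [0, ∞) be a nonincreasing, locally absolutely continuous function satisfying the differential inequality Θ(q) ≤ C(−Θ'(q))^{(N+1)/N} for almost every q > r₀. Then Θ(q) = 0 for every q > r₀ + (N+1) C^{N/(N+1)} Θ(r₀)^{1/(N+1)}. -/
open MeasureTheory Filter Metric Set
open scoped RealInnerProductSpace NNReal Topology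

noncomputable section

/-- `ℝ^N`. -/
abbrev En (N : ℕ) := EuclideanSpace ℝ (Fin N)

variable {N : ℕ}

/-- Hypothesis (F1): `f ≥ 0` and `f 0 = 0`. -/
def SatisfiesF1 (f : En N → ℝ) : Prop :=
  (∀ ξ, 0 ≤ f ξ) ∧ f 0 = 0

/-- Hypothesis (F3): uniform convexity with constant `ε` whenever `‖ξ‖ > r + 1`. -/
def SatisfiesF3 (f : En N → ℝ) (r ε : ℝ) : Prop :=
  ∀ ξ ζ : En N, r + 1 < ‖ξ‖ → ∀ θ ∈ Set.Icc (0:ℝ) 1,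
    f (θ • ξ + (1 - θ) • ζ) ≤ θ * f ξ + (1 - θ) * f ζ - ε / 2 * (θ * (1 - θ) * ‖ξ - ζ‖ ^ 2)

/-- Variant (F*3): uniform convexity with constant `ε` whenever `‖ζ‖ > r + 1`. -/
def SatisfiesF3ζ (f : En N → ℝ) (r ε : ℝ) : Prop :=
  ∀ ξ ζ : En N, r + 1 < ‖ζ‖ → ∀ θ ∈ Set.Icc (0:ℝ) 1,
    f (θ • ξ + (1 - θ) • ζ) ≤ θ * f ξ + (1 - θ) * f ζ - ε / 2 * (θ * (1 - θ) * ‖ξ - ζ‖ ^ 2)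

/-- `μ`-uniform convexity everywhere. -/
def UnifConvex (f : En N → ℝ) (μ : ℝ) : Prop :=
  ∀ ξ ζ : En N, ∀ θ ∈ Set.Icc (0:ℝ) 1,
    f (θ • ξ + (1 - θ) • ζ) ≤ θ * f ξ + (1 - θ) * f ζ - μ / 2 * (θ * (1 - θ) * ‖ξ - ζ‖ ^ 2)

/-- `Ω` is an `R`-uniformly convex set. -/
def UniformlyConvexSet (Ω : Set (En N)) (R : ℝ) : Prop :=
  ∀ γ ∈ frontier Ω, ∃ b : En N, ‖b‖ = 1 ∧
    ∀ γ' ∈ frontier Ω, (1 / 2) * ‖γ' - γ‖ ^ 2 ≤ R * (inner ℝ b (γ' - γ) : ℝ)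

/-- `φ` satisfies the lower bounded slope condition of rank `M` on `∂Ω`. -/
def LowerBoundedSlope (Ω : Set (En N)) (φ : En N → ℝ) (M : ℝ) : Prop :=
  0 ≤ M ∧ ∀ γ ∈ frontier Ω, ∃ z : En N, ‖z‖ ≤ M ∧
    ∀ γ' ∈ frontier Ω, φ γ + (inner ℝ z (γ' - γ) : ℝ) ≤ φ γ'

/-- Membership in `W^{1,1}(Ω)` (modelled via the pointwise a.e. gradient). -/
def MemW11 (Ω : Set (En N)) (u : En N → ℝ) : Prop :=
  IntegrableOn u Ω ∧ IntegrableOn (fun x => ‖gradient u x‖) Ω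

/-- Membership in the Dirichlet class `φ + W^{1,1}_0(Ω)`:
`u ∈ W^{1,1}(Ω)` and `u = φ` on `∂Ω`. -/
def MemClass (Ω : Set (En N)) (φ u : En N → ℝ) : Prop :=
  MemW11 Ω u ∧ Set.EqOn u φ (frontier Ω)

/-- The functional `I(u) = ∫_Ω [f(∇u) + g u] dx`. -/
def funcI (Ω : Set (En N)) (f : En N → ℝ) (g u : En N → ℝ) : ℝ :=
  ∫ x in Ω, (f (gradient u x) + g x * u x)

/-- `u` is a minimizer of `I` in the class `φ + W^{1,1}_0(Ω)`. -/
def IsMinimizer (Ω : Set (En N)) (f : En N → ℝ) (g φ u : En N → ℝ) : Prop :=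
  MemClass Ω φ u ∧ ∀ v, MemClass Ω φ v → funcI Ω f g u ≤ funcI Ω f g v

/-- `u` is locally Lipschitz continuous in the open set `Ω`. -/
def LocLipschitzOn (Ω : Set (En N)) (u : En N → ℝ) : Prop :=
  ∀ x ∈ Ω, ∃ K : ℝ≥0, ∃ s ∈ 𝓝 x, s ⊆ Ω ∧ LipschitzOnWith K u s

/-- `fs` is the convexification `f**` of `f`: the greatest convex function `≤ f`. -/
def IsConvexification (f fs : En N → ℝ) : Prop :=
  ConvexOn ℝ Set.univ fs ∧ (∀ x, fs x ≤ f x) ∧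
    ∀ h : En N → ℝ, ConvexOn ℝ Set.univ h → (∀ x, h x ≤ f x) → ∀ x, h x ≤ fs x

/-- Superlinearity: `f ξ / ‖ξ‖ → ∞` as `‖ξ‖ → ∞`. -/
def Superlinear (f : En N → ℝ) : Prop :=
  Tendsto (fun ξ => f ξ / ‖ξ‖) (comap norm atTop) atTop

/-- The (real-valued) polar `f*` of `f`. -/
def polarReal (f : En N → ℝ) (ξ : En N) : ℝ :=
  sSup (Set.range fun x => (inner ℝ x ξ : ℝ) - f x)

/-- The auxiliary function `ω_α(x) = (N/α) f*(α (x - x₀)/N)`. -/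
def omegaFun (f : En N → ℝ) (x₀ : En N) (α : ℝ) (x : En N) : ℝ :=
  ((N : ℝ) / α) * polarReal f ((α / (N : ℝ)) • (x - x₀))

/-!
Write the inequality as `Θ ≤ C (-Θ')^p` with `p > 1` and put `β = 1 - 1/p`. Wherever `Θ > 0`,
the inequality forces `Θ' ≠ 0` almost everywhere, so `Θ` is differentiable there and
`(Θ^β)' = β Θ^(β-1) Θ' ≤ -β C^(-1/p)`. A nonincreasing function satisfies `f b - f a ≤ ∫ a..b, f'`
(its singular part is nonpositive), so as long as `Θ q > 0` we get
`Θ q ^ β + β C^(-1/p) (q - r₀) ≤ Θ r₀ ^ β`, which bounds `q`.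
-/

lemma AntitoneOn.sub_le_integral_deriv {f : ℝ → ℝ} {a b : ℝ} (hab : a ≤ b)
    (hf : AntitoneOn f (Icc a b)) :
    f b - f a ≤ ∫ t in a..b, deriv f t := by
  have hf' : MonotoneOn (-f) (uIcc a b) := by rw [uIcc_of_le hab]; exact hf.neg
  have hmem := hf'.intervalIntegral_deriv_mem_uIcc
  rw [uIcc_of_le (by simpa using hf (left_mem_Icc.2 hab) (right_mem_Icc.2 hab) hab)] at hmem
  simp only [deriv.neg', intervalIntegral.integral_neg, Pi.neg_apply] at hmem
  linarith [hmem.2]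

lemma AntitoneOn.intervalIntegrable_deriv {f : ℝ → ℝ} {a b : ℝ}
    (hf : AntitoneOn f (uIcc a b)) : IntervalIntegrable (deriv f) volume a b := by
  simpa [deriv.neg', Pi.neg_def] using hf.neg.intervalIntegrable_deriv.neg

lemma AntitoneOn.add_mul_le_of_le_neg_deriv {f : ℝ → ℝ} {a b m : ℝ} (hab : a ≤ b)
    (hf : AntitoneOn f (Icc a b)) (hm : ∀ᵐ t, t ∈ Ioc a b → m ≤ -deriv f t) :
    f b + (b - a) * m ≤ f a := by
  have hint : IntegrableOn (deriv f) (Ioc a b) :=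
    (hf.mono (by rw [uIcc_of_le hab])).intervalIntegrable_deriv.1
  have hle : ∫ t in a..b, deriv f t ≤ ∫ _ in a..b, -m := by
    rw [intervalIntegral.integral_of_le hab, intervalIntegral.integral_of_le hab]
    refine setIntegral_mono_on_ae hint (integrableOn_const (by simp)) measurableSet_Ioc ?_
    filter_upwards [hm] with t ht hmem using by linarith [ht hmem]
  have := hf.sub_le_integral_deriv hab
  simp only [intervalIntegral.integral_const, smul_eq_mul] at hle
  linarith

lemma deriv_rpow_le_of_le_mul_neg_deriv_rpow {f : ℝ → ℝ} {t C p : ℝ} (hC : 0 < C) (hp : 1 ≤ p)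
    (hft : 0 < f t) (hf' : deriv f t ≤ 0) (h : f t ≤ C * (-deriv f t) ^ p) :
    deriv (fun s ↦ f s ^ (1 - p⁻¹)) t ≤ -((1 - p⁻¹) / C ^ p⁻¹) := by
  have hp₀ : 0 < p := by linarith
  have hdiff : DifferentiableAt ℝ f t := by
    -- otherwise `deriv f t = 0` and `h` would give `f t ≤ 0`
    by_contra hnd
    rw [deriv_zero_of_not_differentiableAt hnd, neg_zero, Real.zero_rpow hp₀.ne', mul_zero] at h
    linarith
  have hbound : (f t / C) ^ p⁻¹ ≤ -deriv f t :=
    (Real.rpow_inv_le_iff_of_pos (by positivity) (by linarith) hp₀).2 ((div_le_iff₀' hC).2 h)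
  have hβ : 0 ≤ 1 - p⁻¹ := sub_nonneg.2 (inv_le_one_of_one_le₀ hp)
  have hcancel : f t ^ (1 - p⁻¹ - 1) * (f t / C) ^ p⁻¹ = 1 / C ^ p⁻¹ := by
    rw [Real.div_rpow hft.le hC.le, mul_div_assoc', ← Real.rpow_add hft]
    norm_num
  rw [(hdiff.hasDerivAt.rpow_const (Or.inl hft.ne')).deriv]
  calc deriv f t * (1 - p⁻¹) * f t ^ (1 - p⁻¹ - 1)
      = -((1 - p⁻¹) * f t ^ (1 - p⁻¹ - 1) * -deriv f t) := by ring
    _ ≤ -((1 - p⁻¹) * f t ^ (1 - p⁻¹ - 1) * (f t / C) ^ p⁻¹) := by gcongr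
    _ = -((1 - p⁻¹) / C ^ p⁻¹) := by rw [mul_assoc, hcancel]; ring

lemma rpow_add_mul_le_of_le_mul_neg_deriv_rpow {Θ : ℝ → ℝ} {C p r₀ q : ℝ} (hC : 0 < C)
    (hp : 1 ≤ p) (hmono : AntitoneOn Θ (Ici r₀))
    (hineq : ∀ᵐ t, r₀ < t → Θ t ≤ C * (-deriv Θ t) ^ p) (hr₀q : r₀ ≤ q) (hΘq : 0 < Θ q) :
    Θ q ^ (1 - p⁻¹) + (q - r₀) * ((1 - p⁻¹) / C ^ p⁻¹) ≤ Θ r₀ ^ (1 - p⁻¹) := by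
  have hΘ : ∀ t ∈ Icc r₀ q, Θ q ≤ Θ t := fun t ht ↦ hmono ht.1 (mem_Ici.2 hr₀q) ht.2
  have hF : AntitoneOn (fun t ↦ Θ t ^ (1 - p⁻¹)) (Icc r₀ q) := fun a ha b hb hab ↦
    Real.rpow_le_rpow (hΘq.trans_le (hΘ b hb)).le (hmono ha.1 hb.1 hab)
      (sub_nonneg.2 (inv_le_one_of_one_le₀ hp))
  refine hF.add_mul_le_of_le_neg_deriv hr₀q ?_
  filter_upwards [hineq] with t ht hmem
  have hderiv : deriv Θ t ≤ 0 := by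
    rw [← derivWithin_of_mem_nhds (Ici_mem_nhds hmem.1)]
    exact hmono.derivWithin_nonpos
  have hΘt : 0 < Θ t := hΘq.trans_le (hΘ t (Ioc_subset_Icc_self hmem))
  linarith [deriv_rpow_le_of_le_mul_neg_deriv_rpow hC hp hΘt hderiv (ht hmem.1)]

theorem eq_zero_of_le_mul_neg_deriv_rpow {Θ : ℝ → ℝ} {C p r₀ : ℝ} (hC : 0 < C) (hp : 1 < p)
    (hpos : ∀ t, r₀ ≤ t → 0 ≤ Θ t) (hmono : AntitoneOn Θ (Ici r₀))
    (hineq : ∀ᵐ t, r₀ < t → Θ t ≤ C * (-deriv Θ t) ^ p) {q : ℝ}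
    (hq : r₀ + C ^ p⁻¹ * Θ r₀ ^ (1 - p⁻¹) / (1 - p⁻¹) < q) : Θ q = 0 := by
  have hβ : 0 < 1 - p⁻¹ := sub_pos.2 (inv_lt_one_of_one_lt₀ hp)
  have hr₀q : r₀ ≤ q := by
    have := hpos r₀ le_rfl
    have : 0 ≤ C ^ p⁻¹ * Θ r₀ ^ (1 - p⁻¹) / (1 - p⁻¹) := by positivity
    linarith
  by_contra hΘq₀
  have hΘq : 0 < Θ q := (hpos q hr₀q).lt_of_ne' hΘq₀
  have hdrop := rpow_add_mul_le_of_le_mul_neg_deriv_rpow hC hp.le hmono hineq hr₀q hΘq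
  have hlt : q - r₀ < Θ r₀ ^ (1 - p⁻¹) / ((1 - p⁻¹) / C ^ p⁻¹) := by
    have : 0 < Θ q ^ (1 - p⁻¹) := Real.rpow_pos_of_pos hΘq _
    exact (lt_div_iff₀ (by positivity)).2 (by linarith)
  rw [div_div_eq_mul_div, mul_comm] at hlt
  linarith

theorem statement_11_general (N : ℕ) (hN : 1 ≤ N) (C : ℝ) (hC : 0 < C) (r₀ : ℝ)
    (Θ : ℝ → ℝ) (hpos : ∀ q, r₀ ≤ q → 0 ≤ Θ q)
    (hmono : AntitoneOn Θ (Set.Ici r₀))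
    (hineq : ∀ᵐ q ∂(volume : Measure ℝ), r₀ < q →
      Θ q ≤ C * (-(deriv Θ q)) ^ (((N : ℝ) + 1) / N)) :
    ∀ q, r₀ + ((N : ℝ) + 1) * C ^ ((N : ℝ) / (N + 1)) * (Θ r₀) ^ ((1 : ℝ) / (N + 1)) < q →
      Θ q = 0 := by
  intro q hq
  have hN₀ : (0 : ℝ) < N := by exact_mod_cast hN
  have hp : 1 < ((N : ℝ) + 1) / N := by rw [one_lt_div hN₀]; linarith
  refine eq_zero_of_le_mul_neg_deriv_rpow hC hp hpos hmono hineq ?_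
  have hβ : 1 - (N : ℝ) / (N + 1) = 1 / (N + 1) := by field_simp; ring
  rw [inv_div, hβ]
  convert hq using 2
  field_simp

/-- Hartman–Stampacchia lemma. Local absolute continuity of the
monotone function `Θ` is expressed by the fundamental theorem of calculus for its a.e.
derivative. -/
theorem statement_11 (N : ℕ) (hN : 1 ≤ N) (C : ℝ) (hC : 0 < C) (r₀ : ℝ)
    (Θ : ℝ → ℝ) (hpos : ∀ q, r₀ ≤ q → 0 ≤ Θ q)
    (hmono : AntitoneOn Θ (Set.Ici r₀))
    (hAC : ∀ a b, r₀ ≤ a → a ≤ b → Θ b - Θ a = ∫ t in a..b, deriv Θ t)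
    (hineq : ∀ᵐ q ∂(volume : Measure ℝ), r₀ < q →
      Θ q ≤ C * (-(deriv Θ q)) ^ (((N : ℝ) + 1) / N)) :
    ∀ q, r₀ + ((N : ℝ) + 1) * C ^ ((N : ℝ) / (N + 1)) * (Θ r₀) ^ ((1 : ℝ) / (N + 1)) < q →
      Θ q = 0 :=
  statement_11_general N hN C hC r₀ Θ hpos hmono hineq
end
end

section
/- Let Ω ⊂ ℝ^N be an open bounded set, let u : Ω → ℝ be locally Lipschitz and bounded, and suppose there is a constant q such that for almost every x ∈ Ω and for every z ∈ ∂Ω one has ⟨∇u(x), x − z⟩ − u(x) ≤ q. Then |∇u(x)| ≤ (‖u‖_∞ + q) / dist(x, ∂Ω) for almost every x ∈ Ω. -/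
/-!
Walk from `x` in the direction of `-∇u(x)` until the ray leaves the bounded set `Ω`, at a boundary
point `z`. Along this ray `⟨∇u(x), x - z⟩ = |∇u(x)| |x - z| ≥ |∇u(x)| dist(x, ∂Ω)`, while the
hypothesis bounds the left-hand side by `q + u(x) ≤ ‖u‖_∞ + q`.
-/

open MeasureTheory Filter Metric Set
open scoped RealInnerProductSpace NNReal Topology

noncomputable section

variable {N : ℕ}

theorem IsPreconnected.inter_frontier_nonempty {X : Type*} [TopologicalSpace X] {s t : Set X}
    (ht : IsPreconnected t) (hts : (t ∩ s).Nonempty) (hts' : (t \ s).Nonempty) :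
    (t ∩ frontier s).Nonempty := by
  by_contra! hfr
  have hcover : t ⊆ interior s ∪ interior sᶜ := by
    intro y hy
    have hy' : y ∉ frontier s := fun h => (eq_empty_iff_forall_notMem.1 hfr) y ⟨hy, h⟩
    by_cases hys : y ∈ s
    · left
      by_contra h
      exact hy' ⟨subset_closure hys, h⟩
    · right
      by_contra h
      exact hy' (frontier_compl s ▸ ⟨subset_closure hys, h⟩)
  have hdisj : Disjoint (interior s) (interior sᶜ) :=
    disjoint_compl_right.mono interior_subset interior_subset
  rcases ht.subset_or_subset isOpen_interior isOpen_interior hdisj hcover with hsub | hsub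
  · obtain ⟨y, hyt, hys⟩ := hts'
    exact hys (interior_subset (hsub hyt))
  · obtain ⟨y, hyt, hys⟩ := hts
    exact interior_subset (hsub hyt) hys

theorem Bornology.IsBounded.exists_add_smul_mem_frontier {E : Type*} [NormedAddCommGroup E]
    [NormedSpace ℝ E] {s : Set E} (hb : Bornology.IsBounded s) {x : E} (hx : x ∈ s) {v : E}
    (hv : v ≠ 0) : ∃ t : ℝ, 0 ≤ t ∧ x + t • v ∈ frontier s := by
  obtain ⟨R, hR⟩ := hb.subset_closedBall x
  have hvpos : 0 < ‖v‖ := norm_pos_iff.2 hv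
  set T := (|R| + 1) / ‖v‖
  have hT : 0 ≤ T := by positivity
  have hfar : x + T • v ∉ s := fun h => by
    have hdist : dist (x + T • v) x = |R| + 1 := by
      rw [dist_eq_norm, add_sub_cancel_left, norm_smul, Real.norm_of_nonneg hT,
        div_mul_cancel₀ _ hvpos.ne']
    have := mem_closedBall.1 (hR h)
    linarith [le_abs_self R]
  have hray : IsPreconnected ((fun t : ℝ => x + t • v) '' Icc 0 T) :=
    isPreconnected_Icc.image _ (by fun_prop)
  obtain ⟨_, ⟨t, ht, rfl⟩, hz⟩ := hray.inter_frontier_nonempty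
    ⟨x, ⟨0, left_mem_Icc.2 hT, by simp⟩, hx⟩ ⟨_, ⟨T, right_mem_Icc.2 hT, rfl⟩, hfar⟩
  exact ⟨t, ht.1, hz⟩

theorem norm_le_div_infDist_frontier {E : Type*} [NormedAddCommGroup E] [InnerProductSpace ℝ E]
    {s : Set E} (hs : IsOpen s) (hb : Bornology.IsBounded s) {x : E} (hx : x ∈ s) {g : E} {c : ℝ}
    (hc : ∀ z ∈ frontier s, ⟪g, x - z⟫ ≤ c) : ‖g‖ ≤ c / infDist x (frontier s) := by
  rcases eq_or_ne g 0 with rfl | hg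
  · rcases (frontier s).eq_empty_or_nonempty with he | ⟨z, hz⟩
    · simp [he] -- `infDist x ∅ = 0`, so the bound reads `0 ≤ c / 0 = 0`
    · exact norm_zero (E := E) ▸ div_nonneg (by simpa using hc z hz) infDist_nonneg
  obtain ⟨t, ht, hz⟩ := hb.exists_add_smul_mem_frontier hx (neg_ne_zero.2 hg)
  set z := x + t • -g
  have hd : 0 < infDist x (frontier s) :=
    (isClosed_frontier.notMem_iff_infDist_pos ⟨z, hz⟩).1 fun h =>
      hs.inter_frontier_eq.subset ⟨hx, h⟩
  have hxz : x - z = t • g := by simp [z]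
  rw [le_div_iff₀ hd]
  calc ‖g‖ * infDist x (frontier s) ≤ ‖g‖ * dist x z :=
        mul_le_mul_of_nonneg_left (infDist_le_dist_of_mem hz) (norm_nonneg _)
    _ = ⟪g, x - z⟫ := by
        rw [dist_eq_norm, hxz, norm_smul, inner_smul_right, real_inner_self_eq_norm_sq,
          Real.norm_of_nonneg ht]
        ring
    _ ≤ c := hc z hz

theorem statement_12_general (N : ℕ) (Ω : Set (En N)) (hΩo : IsOpen Ω)
    (hΩb : Bornology.IsBounded Ω)
    (u : En N → ℝ)
    (M : ℝ) (hM : ∀ x ∈ Ω, |u x| ≤ M)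
    (q : ℝ)
    (h : ∀ᵐ x ∂(volume.restrict Ω), ∀ z ∈ frontier Ω,
      (inner ℝ (gradient u x) (x - z) : ℝ) - u x ≤ q) :
    ∀ᵐ x ∂(volume.restrict Ω),
      ‖gradient u x‖ ≤ (M + q) / Metric.infDist x (frontier Ω) := by
  filter_upwards [h, ae_restrict_mem hΩo.measurableSet] with x hx hxΩ
  refine norm_le_div_infDist_frontier hΩo hΩb hxΩ fun z hz => ?_
  linarith [hx z hz, le_abs_self (u x), hM x hxΩ]

/-- the gradient bound `|∇u(x)| ≤ (‖u‖_∞ + q)/dist(x, ∂Ω)` deduced from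
the support-function inequality `⟨∇u(x), x - z⟩ - u(x) ≤ q` for all boundary points `z`. -/
theorem statement_12 (N : ℕ) (Ω : Set (En N)) (hΩo : IsOpen Ω)
    (hΩb : Bornology.IsBounded Ω)
    (u : En N → ℝ) (hLip : LocLipschitzOn Ω u)
    (M : ℝ) (hM : ∀ x ∈ Ω, |u x| ≤ M)
    (q : ℝ)
    (h : ∀ᵐ x ∂(volume.restrict Ω), ∀ z ∈ frontier Ω,
      (inner ℝ (gradient u x) (x - z) : ℝ) - u x ≤ q) :
    ∀ᵐ x ∂(volume.restrict Ω),
      ‖gradient u x‖ ≤ (M + q) / Metric.infDist x (frontier Ω) :=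
  statement_12_general N Ω hΩo hΩb u M hM q h
end
end

section
/- Let u : Ω → ℝ, x̄ ∈ Ω, ρ > 0 with the closed ball B_ρ(x̄) ⊂ Ω, and constants 0 < δ ≤ δ'. Assume u(x) ≤ u(x̄) + ∇u(x̄)·(x−x̄) + (δ/2)|x−x̄| and u(x) ≥ u(x̄) + ∇u(x̄)·(x−x̄) − (δ'/2)|x−x̄| for all x ∈ B_ρ(x̄). Let v : ℝ^N → ℝ be a function with δ|x| ≤ v(x) ≤ δ'|x| for all x (e.g. v(x) = sup_j ξ_j·x for finitely many vectors ξ_j with this property), and define w_ρ(x) := v(x−x̄) + u(x̄) + ∇u(x̄)·(x−x̄) − (δ/3)ρ. Then w_ρ(x) ≥ u(x) for every x ∈ ∂B_ρ(x̄), and w_ρ(x) ≤ u(x) for every x in the ball B_{(δ/δ')(2ρ/9)}(x̄). -/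
open MeasureTheory Filter Metric Set
open scoped RealInnerProductSpace NNReal Topology

noncomputable section

variable {N : ℕ}

/-! On the sphere `∂B_ρ(x̄)` the cone `v(x - x̄)` rises at least `δρ` above the tangent plane, which
pays for both the downward shift `δρ/3` and the upper deviation `δρ/2` of `u`. On the small ball,
`v` and the lower deviation of `u` together cost at most `(3/2) δ' |x - x̄| < δρ/3`. -/

section ConeComparison

variable {E : Type*} [SeminormedAddCommGroup E] {u v ℓ : E → ℝ} {xb : E} {ρ δ δ' : ℝ}

theorem le_cone_sub_on_sphere (hδ : 0 ≤ δ)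
    (hupper : ∀ x ∈ sphere xb ρ, u x ≤ ℓ x + δ / 2 * ‖x - xb‖) (hv : ∀ y, δ * ‖y‖ ≤ v y) :
    ∀ x ∈ sphere xb ρ, u x ≤ v (x - xb) + ℓ x - δ / 3 * ρ := by
  intro x hx
  have hnorm : ‖x - xb‖ = ρ := by rwa [← dist_eq_norm, ← mem_sphere]
  have hρ : 0 ≤ ρ := hnorm ▸ norm_nonneg _
  have hcone := hv (x - xb)
  have hu := hupper x hx
  rw [hnorm] at hcone hu
  linarith [mul_nonneg hδ hρ]

theorem cone_sub_le_on_ball (hδ' : 0 < δ')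
    (hlower : ∀ x ∈ ball xb (δ / δ' * (2 * ρ / 9)), ℓ x - δ' / 2 * ‖x - xb‖ ≤ u x)
    (hv : ∀ y, v y ≤ δ' * ‖y‖) :
    ∀ x ∈ ball xb (δ / δ' * (2 * ρ / 9)), v (x - xb) + ℓ x - δ / 3 * ρ ≤ u x := by
  intro x hx
  have hnorm : δ' * ‖x - xb‖ < δ * (2 * ρ / 9) := by
    rw [← lt_div_iff₀' hδ', ← div_mul_eq_mul_div, ← dist_eq_norm]
    exact hx
  linarith [hlower x hx, hv (x - xb)]

end ConeComparison

theorem ball_mul_subset_closedBall {E : Type*} [PseudoMetricSpace E] {x : E} {c r : ℝ}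
    (hc₀ : 0 ≤ c) (hc₁ : c ≤ 1) : ball x (c * r) ⊆ closedBall x r := by
  intro y hy
  have hr : 0 < r := pos_of_mul_pos_right (dist_nonneg.trans_lt hy) hc₀
  exact ball_subset_closedBall (ball_subset_ball (mul_le_of_le_one_left hr.le hc₁) hy)

theorem statement_14_general (N : ℕ) (u : En N → ℝ) (xb : En N)
    (ρ δ δ' : ℝ) (hδ : 0 < δ) (hδδ' : δ ≤ δ')
    (hupper : ∀ x ∈ Metric.closedBall xb ρ,
      u x ≤ u xb + (inner ℝ (gradient u xb) (x - xb) : ℝ) + δ / 2 * ‖x - xb‖)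
    (hlower : ∀ x ∈ Metric.closedBall xb ρ,
      u xb + (inner ℝ (gradient u xb) (x - xb) : ℝ) - δ' / 2 * ‖x - xb‖ ≤ u x)
    (v : En N → ℝ) (hv : ∀ x, δ * ‖x‖ ≤ v x ∧ v x ≤ δ' * ‖x‖)
    (w : En N → ℝ)
    (hw : ∀ x, w x = v (x - xb) + u xb + (inner ℝ (gradient u xb) (x - xb) : ℝ) - δ / 3 * ρ) :
    (∀ x ∈ Metric.sphere xb ρ, u x ≤ w x) ∧
    (∀ x ∈ Metric.ball xb (δ / δ' * (2 * ρ / 9)), w x ≤ u x) := by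
  have hδ' : 0 < δ' := hδ.trans_le hδδ'
  have hsmall : ball xb (δ / δ' * (2 * ρ / 9)) ⊆ closedBall xb ρ := by
    rw [show δ / δ' * (2 * ρ / 9) = δ / δ' * (2 / 9) * ρ by ring]
    refine ball_mul_subset_closedBall (by positivity) ?_
    linarith [(div_le_one hδ').2 hδδ', div_nonneg hδ.le hδ'.le]
  constructor
  · intro x hx
    rw [hw, add_assoc (v _)]
    exact le_cone_sub_on_sphere hδ.le (fun y hy => hupper y (sphere_subset_closedBall hy))
      (fun y => (hv y).1) x hx
  · intro x hx
    rw [hw, add_assoc (v _)]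
    exact cone_sub_le_on_ball hδ' (fun y hy => hlower y (hsmall hy)) (fun y => (hv y).2) x hx

/-- pyramidal construction, Step 1 of Theorem 5.1: the comparison
function `w_ρ` lies above `u` on `∂B_ρ(x̄)` and below `u` on `B_{(δ/δ')(2ρ/9)}(x̄)`. -/
theorem statement_14 (N : ℕ) (Ω : Set (En N)) (u : En N → ℝ) (xb : En N) (hxb : xb ∈ Ω)
    (ρ δ δ' : ℝ) (hρ : 0 < ρ) (hδ : 0 < δ) (hδδ' : δ ≤ δ')
    (hball : Metric.closedBall xb ρ ⊆ Ω)
    (hupper : ∀ x ∈ Metric.closedBall xb ρ,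
      u x ≤ u xb + (inner ℝ (gradient u xb) (x - xb) : ℝ) + δ / 2 * ‖x - xb‖)
    (hlower : ∀ x ∈ Metric.closedBall xb ρ,
      u xb + (inner ℝ (gradient u xb) (x - xb) : ℝ) - δ' / 2 * ‖x - xb‖ ≤ u x)
    (v : En N → ℝ) (hv : ∀ x, δ * ‖x‖ ≤ v x ∧ v x ≤ δ' * ‖x‖)
    (w : En N → ℝ)
    (hw : ∀ x, w x = v (x - xb) + u xb + (inner ℝ (gradient u xb) (x - xb) : ℝ) - δ / 3 * ρ) :
    (∀ x ∈ Metric.sphere xb ρ, u x ≤ w x) ∧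
    (∀ x ∈ Metric.ball xb (δ / δ' * (2 * ρ / 9)), w x ≤ u x) :=
  statement_14_general N u xb ρ δ δ' hδ hδδ' hupper hlower v hv w hw
end
end

section
/- Let S ⊂ ℝ^N be a convex set, f : ℝ^N → ℝ a convex function which is affine on S̄, say f(ξ) = a·ξ + b for all ξ ∈ S̄ (so that a is a subgradient of f at every point of ∂S). Let B ⊂ ℝ^N be an open ball, let u and w be locally Lipschitz on B with w ≥ u on ∂B (in the trace sense), suppose ∇w(x) ∈ ∂S for a.e. x ∈ B, and set E := {x ∈ B : w(x) ≤ u(x)}. Then ∫_E f(∇w(x)) dx ≤ ∫_E f(∇u(x)) dx. -/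
open MeasureTheory Filter Metric Set
open scoped RealInnerProductSpace NNReal Topology

noncomputable section

variable {N : ℕ}

/-! Geometric Hahn–Banach, separating the open epigraph of `f` from its graph over `S̄`, gives an
affine `ℓ = ⟪c, ·⟫ + d ≤ f` with `ℓ = f` on `S̄`. Since `∇w ∈ ∂S` a.e., `∫_E f(∇w) = ∫_E ℓ(∇w)`,
and `∫_E ℓ(∇u) ≤ ∫_E f(∇u)`, so it suffices that `∫_E ⟪c, ∇(w - u)⟫ = 0`. Because `w ≥ u` on
`∂B`, the function `ṽ = min(w - u, 0)`, cut off outside `B`, is Lipschitz with compact support,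
hence `∫ ∂_c ṽ = 0`; and `∇ṽ = 1_E ∇(w - u)` a.e., a Lipschitz function having zero gradient
a.e. on its zero set. -/

theorem ConvexOn.exists_affine_le_of_concaveOn {E : Type*} [NormedAddCommGroup E]
    [NormedSpace ℝ E] {f : E → ℝ} {C : Set E} (hf : ConvexOn ℝ univ f) (hfc : Continuous f)
    (hfC : ConcaveOn ℝ C f) (hne : C.Nonempty) :
    ∃ (L : StrongDual ℝ E) (d : ℝ), (∀ η, L η + d ≤ f η) ∧ ∀ ξ ∈ C, f ξ = L ξ + d := by
  have hopen : IsOpen {p : E × ℝ | p.1 ∈ univ ∧ f p.1 < p.2} := by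
    simpa using isOpen_lt (hfc.comp continuous_fst) continuous_snd
  have hdisj : Disjoint {p : E × ℝ | p.1 ∈ univ ∧ f p.1 < p.2} {p | p.1 ∈ C ∧ p.2 ≤ f p.1} :=
    disjoint_left.2 fun p hp hp' => (hp.2.trans_le hp'.2).false
  obtain ⟨φ, u, hlt, hle⟩ :=
    geometric_hahn_banach_open hf.convex_strict_epigraph hopen hfC.convex_hypograph hdisj
  set L := φ.comp (ContinuousLinearMap.inl ℝ E ℝ)
  set k := -φ (0, 1)
  have hφ : ∀ ξ t, φ (ξ, t) = L ξ - t * k := fun ξ t => by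
    rw [show ((ξ, t) : E × ℝ) = (ξ, 0) + t • (0, 1) by simp, map_add, map_smul, smul_eq_mul]
    simp [L, k]
  have above : ∀ ξ t, f ξ < t → L ξ - t * k < u := fun ξ t h => hφ ξ t ▸ hlt _ ⟨trivial, h⟩
  have on_C : ∀ ξ ∈ C, u ≤ L ξ - f ξ * k := fun ξ hξ => hφ ξ _ ▸ hle _ ⟨hξ, le_rfl⟩
  obtain ⟨ξ₀, hξ₀⟩ := hne
  have hk : 0 < k := by linarith [above ξ₀ (f ξ₀ + 1) (by linarith), on_C ξ₀ hξ₀]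
  -- the strict inequality on the open epigraph passes to the graph of `f`
  have below : ∀ η, L η - f η * k ≤ u := fun η => le_of_forall_pos_lt_add fun ε hε => by
    have := above η (f η + ε / k) (by linarith [div_pos hε hk])
    rw [add_mul, div_mul_cancel₀ _ hk.ne'] at this
    linarith
  have hL : ∀ η, (k⁻¹ • L) η + -u / k = (L η - u) / k := fun η => by
    simp only [smul_apply, smul_eq_mul]; ring
  refine ⟨k⁻¹ • L, -u / k, fun η => ?_, fun ξ hξ => ?_⟩
  · rw [hL, div_le_iff₀ hk]
    linarith [below η]
  · refine le_antisymm ?_ ?_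
    · rw [hL, le_div_iff₀ hk]
      linarith [on_C ξ hξ]
    · rw [hL, div_le_iff₀ hk]
      linarith [below ξ]

theorem LipschitzWith.indicator_of_eq_zero_on_frontier {E F : Type*}
    [SeminormedAddCommGroup E] [NormedSpace ℝ E] [SeminormedAddCommGroup F] {K : ℝ≥0}
    {m : E → F} {s : Set E} (hm : LipschitzWith K m) (h0 : ∀ x ∈ frontier s, m x = 0) :
    LipschitzWith K (s.indicator m) := by
  have cross : ∀ x ∈ s, ∀ y ∉ s, dist (m x) 0 ≤ K * dist x y := fun x hx y hy => by
    obtain ⟨p, hp, hpf⟩ := (convex_segment x y).isPreconnected.inter_frontier_nonempty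
      ⟨x, left_mem_segment ℝ x y, hx⟩ ⟨y, right_mem_segment ℝ x y, hy⟩
    calc dist (m x) 0 = dist (m x) (m p) := by rw [h0 p hpf]
      _ ≤ K * dist x p := hm.dist_le_mul x p
      _ ≤ K * dist x y := by
        gcongr
        simpa only [dist_eq_norm', dist_comm x] using norm_sub_le_of_mem_segment hp
  refine LipschitzWith.of_dist_le_mul fun x y => ?_
  by_cases hx : x ∈ s <;> by_cases hy : y ∈ s
  · simpa [hx, hy] using hm.dist_le_mul x y
  · simpa [hx, hy] using cross x hx y hy
  · simpa [hx, hy, dist_comm] using cross y hy x hx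
  · simpa [hx, hy] using by positivity

theorem fderiv_indicator_ae_eq {𝕜 E F : Type*} [NontriviallyNormedField 𝕜]
    [NormedAddCommGroup E] [NormedSpace 𝕜 E] [NormedAddCommGroup F] [NormedSpace 𝕜 F]
    [MeasurableSpace E] {μ : Measure E} {s : Set E} (hs : μ (frontier s) = 0) (f : E → F) :
    (fun x => fderiv 𝕜 (s.indicator f) x) =ᵐ[μ] (interior s).indicator (fderiv 𝕜 f) := by
  filter_upwards [measure_eq_zero_iff_ae_notMem.1 hs] with x hx
  by_cases hint : x ∈ interior s
  · rw [indicator_of_mem hint]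
    refine Filter.EventuallyEq.fderiv_eq ?_
    filter_upwards [isOpen_interior.mem_nhds hint] with y hy
    exact indicator_of_mem (interior_subset hy) f
  · have hcl : x ∉ closure s := fun hcl => hx ⟨hcl, hint⟩
    rw [indicator_of_notMem hint]
    refine (Filter.EventuallyEq.fderiv_eq (f := fun _ => (0 : F)) ?_).trans (fderiv_const_apply 0)
    filter_upwards [isClosed_closure.isOpen_compl.mem_nhds hcl] with y hy
    exact indicator_of_notMem (fun h => hy (subset_closure h)) f

section Lipschitz

variable {E : Type*} [NormedAddCommGroup E] [NormedSpace ℝ E] [FiniteDimensional ℝ E]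
  [MeasurableSpace E] [BorelSpace E] {μ : Measure E} [μ.IsAddHaarMeasure] {K : ℝ≥0} {g : E → ℝ}

theorem LipschitzWith.integral_fderiv_apply_eq_zero (hg : LipschitzWith K g)
    (hcs : HasCompactSupport g) (v : E) : ∫ x, fderiv ℝ g x v ∂μ = 0 := by
  have h := integral_lineDeriv_mul_eq (μ := μ) (LipschitzWith.const (1 : ℝ)) hg hcs (-v)
  have hconst : ∀ x w, lineDeriv ℝ (fun _ : E => (1 : ℝ)) x w = 0 := by simp [lineDeriv]
  simp only [hconst, zero_mul, integral_zero, mul_one, neg_neg] at h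
  exact (integral_congr_ae (hg.ae_differentiableAt.mono fun x hx =>
    hx.lineDeriv_eq_fderiv)).symm.trans h.symm

theorem LipschitzWith.ae_fderiv_eq_zero_of_eq_zero (hg : LipschitzWith K g) :
    ∀ᵐ x ∂μ, g x = 0 → fderiv ℝ g x = 0 := by
  filter_upwards [(hg.min_const 0).ae_differentiableAt (μ := μ),
    (hg.max_const 0).ae_differentiableAt (μ := μ)] with x hmin hmax hx
  -- `g = min g 0 + max g 0`, and both summands have a local extremum at a zero of `g`
  have hmin0 : fderiv ℝ (fun y => min (g y) 0) x = 0 :=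
    IsLocalMax.fderiv_eq_zero (Eventually.of_forall fun y => by simp [hx])
  have hmax0 : fderiv ℝ (fun y => max (g y) 0) x = 0 :=
    IsLocalMin.fderiv_eq_zero (Eventually.of_forall fun y => by simp [hx])
  have hsum : g = fun y => min (g y) 0 + max (g y) 0 := funext fun y => by simp [min_add_max]
  rw [hsum, fderiv_fun_add hmin hmax, hmin0, hmax0, add_zero]

theorem LipschitzWith.fderiv_min_zero_ae_eq (hg : LipschitzWith K g) :
    (fun x => fderiv ℝ (fun y => min (g y) 0) x) =ᵐ[μ] {x | g x ≤ 0}.indicator (fderiv ℝ g) := by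
  filter_upwards [hg.ae_fderiv_eq_zero_of_eq_zero] with x hx
  rcases lt_trichotomy (g x) 0 with hneg | hzero | hpos
  · rw [indicator_of_mem (show x ∈ {x | g x ≤ 0} from hneg.le)]
    refine Filter.EventuallyEq.fderiv_eq ?_
    filter_upwards [hg.continuous.continuousAt.eventually_lt continuousAt_const hneg] with y hy
    exact min_eq_left hy.le
  · rw [indicator_of_mem (show x ∈ {x | g x ≤ 0} from hzero.le), hx hzero]
    exact IsLocalMax.fderiv_eq_zero (Eventually.of_forall fun y => by simp [hzero])
  · rw [indicator_of_notMem (show x ∉ {x | g x ≤ 0} from not_le.2 hpos)]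
    refine (Filter.EventuallyEq.fderiv_eq (f := fun _ => (0 : ℝ)) ?_).trans (fderiv_const_apply 0)
    filter_upwards [continuousAt_const.eventually_lt hg.continuous.continuousAt hpos] with y hy
    exact min_eq_right hy.le

theorem LipschitzWith.setIntegral_fderiv_apply_eq_zero_of_nonneg_on_sphere
    (hg : LipschitzWith K g) {x₀ : E} {ρ : ℝ} (hsph : ∀ x ∈ sphere x₀ ρ, 0 ≤ g x) (v : E) :
    ∫ x in ball x₀ ρ ∩ {x | g x ≤ 0}, fderiv ℝ g x v ∂μ = 0 := by
  set V := (ball x₀ ρ).indicator fun x => min (g x) 0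
  have hV : LipschitzWith K V := (hg.min_const 0).indicator_of_eq_zero_on_frontier
    fun x hx => min_eq_right (hsph x (frontier_ball_subset_sphere hx))
  have hVcs : HasCompactSupport V := HasCompactSupport.intro (isCompact_closedBall x₀ ρ)
    fun x hx => indicator_of_notMem (fun h => hx (ball_subset_closedBall h)) _
  have hdV :
      (fun x => fderiv ℝ V x) =ᵐ[μ] (ball x₀ ρ ∩ {x | g x ≤ 0}).indicator (fderiv ℝ g) := by
    filter_upwards [fderiv_indicator_ae_eq (𝕜 := ℝ) ((convex_ball x₀ ρ).addHaar_frontier μ)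
      fun x => min (g x) 0, hg.fderiv_min_zero_ae_eq (μ := μ)] with x h₁ h₂
    rw [h₁, isOpen_ball.interior_eq, ← indicator_indicator]
    by_cases hx : x ∈ ball x₀ ρ
    · rw [indicator_of_mem hx, indicator_of_mem hx, h₂]
    · rw [indicator_of_notMem hx, indicator_of_notMem hx]
  have hmeas : MeasurableSet (ball x₀ ρ ∩ {x | g x ≤ 0}) :=
    measurableSet_ball.inter (measurableSet_le hg.continuous.measurable measurable_const)
  refine (integral_indicator hmeas).symm.trans
    ((integral_congr_ae ?_).trans (hV.integral_fderiv_apply_eq_zero hVcs v))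
  filter_upwards [hdV] with x hx
  by_cases hxs : x ∈ ball x₀ ρ ∩ {x | g x ≤ 0} <;> simp [hx, hxs]

end Lipschitz

section Gradient

variable {E : Type*} [NormedAddCommGroup E] [InnerProductSpace ℝ E] [FiniteDimensional ℝ E]
  [MeasurableSpace E] [BorelSpace E] {μ : Measure E}

theorem LipschitzWith.integrableOn_comp_gradient {K : ℝ≥0} {h : E → ℝ}
    (hh : LipschitzWith K h) {F : E → ℝ} (hF : Continuous F) {s : Set E} (hs : μ s ≠ ⊤) :
    IntegrableOn (fun x => F (gradient h x)) s μ := by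
  obtain ⟨M, hM⟩ := (isCompact_closedBall (0 : E) K).exists_bound_of_continuousOn hF.continuousOn
  have hgrad : ∀ x, ‖gradient h x‖ ≤ K := fun x => by
    rw [gradient, LinearIsometryEquiv.norm_map]
    exact norm_fderiv_le_of_lipschitz ℝ hh
  refine Measure.integrableOn_of_bounded (M := M) hs ?_
    (ae_of_all _ fun x => hM _ (mem_closedBall_zero_iff.2 (hgrad x)))
  exact (hF.measurable.comp ((InnerProductSpace.toDual ℝ E).symm.continuous.measurable.comp
    (measurable_fderiv ℝ h))).aestronglyMeasurable

variable [μ.IsAddHaarMeasure]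

theorem setIntegral_comp_gradient_le_of_le_on_sphere {f : E → ℝ} {C : Set E}
    (hf : ConvexOn ℝ univ f) (hfc : Continuous f) (hfC : ConcaveOn ℝ C f) {u w : E → ℝ}
    {Ku Kw : ℝ≥0} (hu : LipschitzWith Ku u) (hw : LipschitzWith Kw w) {x₀ : E} {ρ : ℝ}
    (hbd : ∀ x ∈ sphere x₀ ρ, u x ≤ w x)
    (hgrad : ∀ᵐ x ∂μ.restrict (ball x₀ ρ), gradient w x ∈ C) :
    ∫ x in ball x₀ ρ ∩ {x | w x ≤ u x}, f (gradient w x) ∂μ ≤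
      ∫ x in ball x₀ ρ ∩ {x | w x ≤ u x}, f (gradient u x) ∂μ := by
  set s := ball x₀ ρ ∩ {x | w x ≤ u x}
  have hmeas : MeasurableSet s :=
    measurableSet_ball.inter (measurableSet_le hw.continuous.measurable hu.continuous.measurable)
  rcases C.eq_empty_or_nonempty with rfl | hne
  · have hball : μ (ball x₀ ρ) = 0 := by simpa using hgrad
    have hs₀ : μ.restrict s = 0 :=
      Measure.restrict_eq_zero.2 (measure_mono_null inter_subset_left hball)
    simp [hs₀]
  obtain ⟨L, d, hle, heq⟩ := hf.exists_affine_le_of_concaveOn hfc hfC hne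
  set c := (InnerProductSpace.toDual ℝ E).symm L
  have hL : ∀ (h : E → ℝ) x, L (gradient h x) = fderiv ℝ h x c := fun h x => by
    rw [← inner_gradient_left, real_inner_comm, InnerProductSpace.toDual_symm_apply]
  have hs : μ s ≠ ⊤ := ((measure_mono inter_subset_left).trans_lt measure_ball_lt_top).ne
  have hint : ∀ {K : ℝ≥0} {h : E → ℝ}, LipschitzWith K h →
      IntegrableOn (fun x => L (gradient h x) + d) s μ := fun hh =>
    hh.integrableOn_comp_gradient (F := fun y => L y + d) (by fun_prop) hs
  have hcancel : ∫ x in s, (L (gradient w x) + d) ∂μ = ∫ x in s, (L (gradient u x) + d) ∂μ := by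
    have h₀ := (hw.sub hu).setIntegral_fderiv_apply_eq_zero_of_nonneg_on_sphere (μ := μ)
      (fun x hx => sub_nonneg.2 (hbd x hx)) c
    simp only [sub_nonpos] at h₀
    rw [← sub_eq_zero, ← integral_sub (hint hw) (hint hu), ← h₀]
    refine integral_congr_ae ?_
    filter_upwards [ae_restrict_of_ae (hw.ae_differentiableAt (μ := μ)),
      ae_restrict_of_ae (hu.ae_differentiableAt (μ := μ))] with x hwx hux
    simp only [fderiv_fun_sub hwx hux, hL, sub_apply]
    ring
  calc ∫ x in s, f (gradient w x) ∂μ = ∫ x in s, (L (gradient w x) + d) ∂μ := by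
        refine setIntegral_congr_ae hmeas ?_
        filter_upwards [(ae_restrict_iff' measurableSet_ball).1 hgrad] with x hx hxs
        exact heq _ (hx hxs.1)
    _ = ∫ x in s, (L (gradient u x) + d) ∂μ := hcancel
    _ ≤ ∫ x in s, f (gradient u x) ∂μ :=
        setIntegral_mono_on (hint hu) (hu.integrableOn_comp_gradient hfc hs) hmeas
          fun x _ => hle _

end Gradient

theorem statement_15_general (N : ℕ) (S : Set (En N)) (hS : Convex ℝ S)
    (f : En N → ℝ) (hf : ConvexOn ℝ Set.univ f)
    (a : En N) (b : ℝ) (haff : ∀ ξ ∈ closure S, f ξ = (inner ℝ a ξ : ℝ) + b)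
    (x₀ : En N) (ρ : ℝ)
    (u w : En N → ℝ)
    (hu : ∃ K : ℝ≥0, LipschitzOnWith K u (Metric.closedBall x₀ ρ))
    (hw : ∃ K : ℝ≥0, LipschitzOnWith K w (Metric.closedBall x₀ ρ))
    (hbd : ∀ x ∈ Metric.sphere x₀ ρ, u x ≤ w x)
    (hgradw : ∀ᵐ x ∂(volume.restrict (Metric.ball x₀ ρ)), gradient w x ∈ frontier S) :
    ∫ x in {y ∈ Metric.ball x₀ ρ | w y ≤ u y}, f (gradient w x) ≤
      ∫ x in {y ∈ Metric.ball x₀ ρ | w y ≤ u y}, f (gradient u x) := by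
  obtain ⟨_, hu⟩ := hu
  obtain ⟨_, hw⟩ := hw
  obtain ⟨ub, hub, hub_eq⟩ := hu.extend_real
  obtain ⟨wb, hwb, hwb_eq⟩ := hw.extend_real
  have hgrad_eq : ∀ {h hb : En N → ℝ}, EqOn h hb (closedBall x₀ ρ) →
      ∀ x ∈ ball x₀ ρ, gradient h x = gradient hb x := fun heq x hx =>
    Filter.EventuallyEq.gradient_eq <| eventually_of_mem (isOpen_ball.mem_nhds hx)
      fun y hy => heq (ball_subset_closedBall hy)
  have hset : {y ∈ ball x₀ ρ | w y ≤ u y} = ball x₀ ρ ∩ {y | wb y ≤ ub y} :=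
    Set.ext fun y => and_congr_right fun hy => by
      rw [hwb_eq (ball_subset_closedBall hy), hub_eq (ball_subset_closedBall hy)]
      exact Iff.rfl
  have hmeas : MeasurableSet (ball x₀ ρ ∩ {y | wb y ≤ ub y}) :=
    measurableSet_ball.inter (measurableSet_le hwb.continuous.measurable hub.continuous.measurable)
  have hfC : ConcaveOn ℝ (closure S) f :=
    (((innerₛₗ ℝ a).concaveOn hS.closure).add (concaveOn_const b hS.closure)).congr
      fun ξ hξ => by simp [haff ξ hξ]
  rw [hset, setIntegral_congr_fun hmeas fun x hx => congrArg f (hgrad_eq hwb_eq x hx.1),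
    setIntegral_congr_fun hmeas fun x hx => congrArg f (hgrad_eq hub_eq x hx.1)]
  refine setIntegral_comp_gradient_le_of_le_on_sphere hf hf.locallyLipschitz.continuous hfC
    hub hwb (fun x hx => ?_) ?_
  · rw [← hub_eq (sphere_subset_closedBall hx), ← hwb_eq (sphere_subset_closedBall hx)]
    exact hbd x hx
  · filter_upwards [hgradw, ae_restrict_mem measurableSet_ball] with x hx hxB
    rw [← hgrad_eq hwb_eq x hxB]
    exact frontier_subset_closure hx

/-- Step 2 of Theorem 5.1: comparison of the energies of `w` and `u`
on the contact set `E = {w ≤ u}`, when `f` is affine on `S̄` and `∇w ∈ ∂S` a.e. -/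
theorem statement_15 (N : ℕ) (S : Set (En N)) (hS : Convex ℝ S)
    (f : En N → ℝ) (hf : ConvexOn ℝ Set.univ f)
    (a : En N) (b : ℝ) (haff : ∀ ξ ∈ closure S, f ξ = (inner ℝ a ξ : ℝ) + b)
    (x₀ : En N) (ρ : ℝ) (hρ : 0 < ρ)
    (u w : En N → ℝ)
    (hu : ∃ K : ℝ≥0, LipschitzOnWith K u (Metric.closedBall x₀ ρ))
    (hw : ∃ K : ℝ≥0, LipschitzOnWith K w (Metric.closedBall x₀ ρ))
    (hbd : ∀ x ∈ Metric.sphere x₀ ρ, u x ≤ w x)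
    (hgradw : ∀ᵐ x ∂(volume.restrict (Metric.ball x₀ ρ)), gradient w x ∈ frontier S) :
    ∫ x in {y ∈ Metric.ball x₀ ρ | w y ≤ u y}, f (gradient w x) ≤
      ∫ x in {y ∈ Metric.ball x₀ ρ | w y ≤ u y}, f (gradient u x) :=
  statement_15_general N S hS f hf a b haff x₀ ρ u w hu hw hbd hgradw
end
end
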